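/- arXiv:2206.10991 — 6 statements merged into one kernel-verified Lean document; each statement's English description precedes it below -/
import Mathlib

section
/- The linear message-passing ODE vec(Ḟ(t)) = −(Ω ⊗ I_n) vec(F(t)) + (W ⊗ Ā) vec(F(t)) − (W̃ ⊗ I_n) vec(F(0)) is the gradient flow (up to factor 2) of the energy E_θ(F) = ⟨vec(F), (Ω ⊗ I_n − W ⊗ Ā) vec(F) + 2(W̃ ⊗ I_n) vec(F(0))⟩ if and only if both Ω and W are symmetric, provided Ā has at least one off-diagonal nonzero entry. -/
open Matrix Kronecker

namespace Matrix

variable {α l m n : Type*} [Ring α] [NoZeroDivisors α] [DecidableEq n]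

theorem kronecker_one_sub_kronecker_inj {X X' Y Y' : Matrix l m α} {B : Matrix n n α} {i j : n}
    (hij : i ≠ j) (hB : B i j ≠ 0) (h : X ⊗ₖ 1 - Y ⊗ₖ B = X' ⊗ₖ 1 - Y' ⊗ₖ B) :
    X = X' ∧ Y = Y' := by
  have hY : Y = Y' := by
    ext a b
    have hab := congr_fun₂ h (a, i) (b, j)
    simp only [sub_apply, kronecker_apply, one_apply_ne hij, mul_zero, zero_sub, neg_inj] at hab
    exact mul_right_cancel₀ hB hab
  refine ⟨?_, hY⟩
  ext a b
  have hab := congr_fun₂ h (a, i) (b, i)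
  simpa only [sub_apply, kronecker_apply, one_apply_eq, mul_one, hY, sub_left_inj] using hab

end Matrix

/-- The linear message-passing ODE with coefficient matrix −(Ω ⊗ I_n − W ⊗ Ā)
is a gradient flow of the energy E_θ (equivalently, the matrix Ω ⊗ I_n − W ⊗ Ā
is symmetric) if and only if both Ω and W are symmetric, provided the symmetric
matrix Ā has a nonzero off-diagonal entry. -/
theorem gradient_flow_iff_symmetric (n d : ℕ)
    (Abar : Matrix (Fin n) (Fin n) ℝ) (hA : Abar.IsSymm)
    (i0 j0 : Fin n) (hij : i0 ≠ j0) (hne : Abar i0 j0 ≠ 0)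
    (Ω W : Matrix (Fin d) (Fin d) ℝ) :
    ((Ω ⊗ₖ (1 : Matrix (Fin n) (Fin n) ℝ)) - (W ⊗ₖ Abar)).IsSymm ↔
      Ω.IsSymm ∧ W.IsSymm := by
  have htranspose : ((Ω ⊗ₖ (1 : Matrix (Fin n) (Fin n) ℝ)) - (W ⊗ₖ Abar))ᵀ =
      Ωᵀ ⊗ₖ (1 : Matrix (Fin n) (Fin n) ℝ) - Wᵀ ⊗ₖ Abar := by
    rw [transpose_sub, ← kroneckerMap_transpose, ← kroneckerMap_transpose, transpose_one, hA.eq]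
  rw [IsSymm, htranspose]
  constructor
  · exact kronecker_one_sub_kronecker_inj hij hne
  · rintro ⟨hΩ, hW⟩
    rw [hΩ.eq, hW.eq]
end

section
/- For a symmetric matrix W decomposed as W = Θ₊ᵀΘ₊ − Θ₋ᵀΘ₋ (positive and negative spectral parts), the energy E_θ(F) = Σ_i ⟨f_i, Ω f_i⟩ − Σ_{i,j} Ā_{ij} ⟨f_i, W f_j⟩ with Ā = D^{−1/2}AD^{−1/2} decomposes as E_θ(F) = Σ_i ⟨f_i, (Ω − W) f_i⟩ + (1/2) Σ_{i,j} ‖Θ₊(∇F)_{ij}‖² − (1/2) Σ_{i,j} ‖Θ₋(∇F)_{ij}‖², where (∇F)_{ij} = f_j/√d_j − f_i/√d_i and sums over (i,j) run over ordered pairs with A_{ij}=1. -/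
/-!
For any bilinear form `B` and symmetric weights `A` with row sums `deg`, expanding
`B (x j - x i) (x j - x i)` and swapping `i` and `j` gives
`½ ∑ A i j B (x j - x i) (x j - x i) = ∑ deg i B (x i) (x i) - ∑ A i j B (x i) (x j)`.
For `x i = f i / √(deg i)` the right side is `∑ B (f i) (f i) - ∑ Ā i j B (f i) (f j)`.
Taking for `B` the form of `W = Θ₊ᵀΘ₊ - Θ₋ᵀΘ₋` and using `vᵀ ΘᵀΘ v = ‖Θ v‖²` gives the
theorem.
-/

open Matrix Finset

namespace LinearMap.BilinForm

theorem sum_mul_apply_sub_sub {ι R M : Type*} [Fintype ι] [CommRing R] [AddCommGroup M]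
    [Module R M] (B : LinearMap.BilinForm R M) {A : Matrix ι ι R} (hA : A.IsSymm) (x : ι → M) :
    ∑ i, ∑ j, A i j * B (x j - x i) (x j - x i)
      = 2 * (∑ i, (∑ j, A i j) * B (x i) (x i) - ∑ i, ∑ j, A i j * B (x i) (x j)) := by
  have h_diag : ∑ i, ∑ j, A i j * B (x j) (x j) = ∑ i, (∑ j, A i j) * B (x i) (x i) := by
    rw [sum_comm]
    simp only [sum_mul, hA.apply]
  have h_cross : ∑ i, ∑ j, A i j * B (x j) (x i) = ∑ i, ∑ j, A i j * B (x i) (x j) := by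
    rw [sum_comm]
    simp only [hA.apply]
  simp only [map_sub, LinearMap.sub_apply, mul_sub, sum_sub_distrib, h_diag, h_cross, sum_mul]
  ring

theorem half_sum_mul_apply_inv_sqrt_smul_sub {ι M : Type*} [Fintype ι] [AddCommGroup M]
    [Module ℝ M] (B : LinearMap.BilinForm ℝ M) {A : Matrix ι ι ℝ} (hA : A.IsSymm)
    {deg : ι → ℝ} (hdeg : ∀ i, deg i = ∑ j, A i j) (hpos : ∀ i, 0 < deg i) (f : ι → M) :
    (1 / 2 : ℝ) * ∑ i, ∑ j, A i j *
        B ((√(deg j))⁻¹ • f j - (√(deg i))⁻¹ • f i) ((√(deg j))⁻¹ • f j - (√(deg i))⁻¹ • f i)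
      = ∑ i, B (f i) (f i) - ∑ i, ∑ j, A i j / (√(deg i) * √(deg j)) * B (f i) (f j) := by
  rw [sum_mul_apply_sub_sub B hA fun i => (√(deg i))⁻¹ • f i]
  have h_diag : ∀ i,
      (∑ j, A i j) * B ((√(deg i))⁻¹ • f i) ((√(deg i))⁻¹ • f i) = B (f i) (f i) := by
    intro i
    have h_sqrt : √(deg i) ^ 2 = deg i := Real.sq_sqrt (hpos i).le
    have h_ne : √(deg i) ≠ 0 := (Real.sqrt_pos.2 (hpos i)).ne'
    rw [← hdeg, LinearMap.map_smul₂, map_smul, smul_eq_mul, smul_eq_mul]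
    field_simp
    rw [h_sqrt]
  have h_cross : ∀ i j, A i j * B ((√(deg i))⁻¹ • f i) ((√(deg j))⁻¹ • f j)
      = A i j / (√(deg i) * √(deg j)) * B (f i) (f j) := by
    intro i j
    rw [LinearMap.map_smul₂, map_smul, smul_eq_mul, smul_eq_mul]
    field_simp
  simp only [h_diag, h_cross]
  ring

end LinearMap.BilinForm

theorem Matrix.sum_sq_mulVec_eq_toBilin' {m n : Type*} [Fintype m] [Fintype n] [DecidableEq n]
    (Θ : Matrix m n ℝ) (v : n → ℝ) :
    ∑ a, (∑ b, Θ a b * v b) ^ 2 = toBilin' (Θᵀ * Θ) v v := by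
  rw [toBilin'_apply', ← mulVec_mulVec, dotProduct_mulVec, vecMul_transpose]
  simp only [dotProduct, mulVec, sq]

theorem energy_attraction_repulsion_decomposition_general (n d : ℕ)
    (G : SimpleGraph (Fin n)) [DecidableRel G.Adj]
    (deg : Fin n → ℝ) (hdeg : ∀ i, deg i = ∑ j, G.adjMatrix ℝ i j)
    (hpos : ∀ i, 0 < deg i)
    (W Ω Θp Θm : Matrix (Fin d) (Fin d) ℝ)
    (hdecomp : W = Θpᵀ * Θp - Θmᵀ * Θm)
    (F : Matrix (Fin n) (Fin d) ℝ) :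
    (∑ i, ∑ a, ∑ b, F i a * Ω a b * F i b)
      - (∑ i, ∑ j, (G.adjMatrix ℝ i j / (Real.sqrt (deg i) * Real.sqrt (deg j))) *
          ∑ a, ∑ b, F i a * W a b * F j b)
    = (∑ i, ∑ a, ∑ b, F i a * (Ω - W) a b * F i b)
      + (1 / 2 : ℝ) * (∑ i, ∑ j, G.adjMatrix ℝ i j *
          ∑ a, (∑ b, Θp a b * (F j b / Real.sqrt (deg j) - F i b / Real.sqrt (deg i))) ^ 2)
      - (1 / 2 : ℝ) * (∑ i, ∑ j, G.adjMatrix ℝ i j *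
          ∑ a, (∑ b, Θm a b * (F j b / Real.sqrt (deg j) - F i b / Real.sqrt (deg i))) ^ 2) := by
  have h_grad : ∀ i j b, F j b / √(deg j) - F i b / √(deg i)
      = ((√(deg j))⁻¹ • F j - (√(deg i))⁻¹ • F i) b := fun i j b => by
    simp only [Pi.sub_apply, Pi.smul_apply, smul_eq_mul, div_eq_inv_mul]
  have h_W := LinearMap.BilinForm.half_sum_mul_apply_inv_sqrt_smul_sub (toBilin' W)
    G.isSymm_adjMatrix hdeg hpos F
  simp only [h_grad, sum_sq_mulVec_eq_toBilin', ← toBilin'_apply]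
  rw [hdecomp] at h_W ⊢
  simp only [map_sub, LinearMap.sub_apply, mul_sub, sum_sub_distrib] at h_W ⊢
  linarith

/-- Energy decomposition: for symmetric W = Θ₊ᵀΘ₊ − Θ₋ᵀΘ₋,
E_θ(F) = Σ_i ⟨f_i, Ω f_i⟩ − Σ_{i,j} Ā_{ij} ⟨f_i, W f_j⟩
       = Σ_i ⟨f_i, (Ω−W) f_i⟩ + (1/2) Σ_{i,j} ‖Θ₊(∇F)_{ij}‖² − (1/2) Σ_{i,j} ‖Θ₋(∇F)_{ij}‖²,
with (∇F)_{ij} = f_j/√d_j − f_i/√d_i and sums over ordered adjacent pairs. -/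
theorem energy_attraction_repulsion_decomposition (n d : ℕ)
    (G : SimpleGraph (Fin n)) [DecidableRel G.Adj]
    (deg : Fin n → ℝ) (hdeg : ∀ i, deg i = ∑ j, G.adjMatrix ℝ i j)
    (hpos : ∀ i, 0 < deg i)
    (W Ω Θp Θm : Matrix (Fin d) (Fin d) ℝ) (hW : W.IsSymm)
    (hdecomp : W = Θpᵀ * Θp - Θmᵀ * Θm)
    (F : Matrix (Fin n) (Fin d) ℝ) :
    (∑ i, ∑ a, ∑ b, F i a * Ω a b * F i b)
      - (∑ i, ∑ j, (G.adjMatrix ℝ i j / (Real.sqrt (deg i) * Real.sqrt (deg j))) *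
          ∑ a, ∑ b, F i a * W a b * F j b)
    = (∑ i, ∑ a, ∑ b, F i a * (Ω - W) a b * F i b)
      + (1 / 2 : ℝ) * (∑ i, ∑ j, G.adjMatrix ℝ i j *
          ∑ a, (∑ b, Θp a b * (F j b / Real.sqrt (deg j) - F i b / Real.sqrt (deg i))) ^ 2)
      - (1 / 2 : ℝ) * (∑ i, ∑ j, G.adjMatrix ℝ i j *
          ∑ a, (∑ b, Θm a b * (F j b / Real.sqrt (deg j) - F i b / Real.sqrt (deg i))) ^ 2) :=
  energy_attraction_repulsion_decomposition_general n d G deg hdeg hpos W Ω Θp Θm hdecomp F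
end

section
/- Consider the update vec(F(t+τ)) = (I + τ W ⊗ Ā)vec(F(t)) with W symmetric with eigenvalues μ_0 < μ_1 ≤ … ≤ μ_{d−1} (μ_0 simple) and Ā = I − Δ. If μ_{d−1}/(λ_{n−1} − 1) < |μ_0| < 2/(τ(2 − λ_{n−1})), then there exists δ < 1 such that vec(F(mτ)) = (1 + τ|μ_0|(λ_{n−1} − 1))^m ( c_{0,n−1}(0) ψ_0 ⊗ φ_{n−1} + O(δ^m) ), i.e. the component along ψ_0 ⊗ φ_{n−1} (highest graph frequency, most negative channel eigenvalue) dominates exponentially. -/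
/-!
In the orthonormal basis `ψ_r ⊗ φ_l` the update matrix `I + τ W ⊗ (I - Δ)` is diagonal with
eigenvalues `1 + τ μ_r (1 - λ_l)`, so `vec F(m) = ∑ c_{r,l}(0) (1 + τ μ_r (1 - λ_l))^m ψ_r ⊗ φ_l`.
The first condition forces `μ_0 < 0` and makes `μ_0 (1 - λ_{n-1}) = |μ_0| (λ_{n-1} - 1)` the
strictly largest value of `μ_r (1 - λ_l)` (strictly, by simplicity of `μ_0` and `λ_{n-1}`);
the second keeps every eigenvalue above `-(1 + τ |μ_0| (λ_{n-1} - 1))`. So the mode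
`(0, n-1)` strictly dominates in modulus, and `δ` is any number between the ratio of the other
moduli to the dominant one and `1`.
-/

open Matrix Kronecker Finset Filter Topology

section Kronecker

variable {R ι κ : Type*} [Fintype ι] [Fintype κ]

def kronVec [Mul R] (x : ι → R) (y : κ → R) : ι × κ → R := fun p => x p.1 * y p.2

variable [CommSemiring R]

theorem kronVec_dotProduct_kronVec (x x' : ι → R) (y y' : κ → R) :
    kronVec x y ⬝ᵥ kronVec x' y' = (x ⬝ᵥ x') * (y ⬝ᵥ y') := by
  simp only [kronVec, dotProduct, Fintype.sum_prod_type, Finset.sum_mul_sum]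
  exact Finset.sum_congr rfl fun _ _ => Finset.sum_congr rfl fun _ _ => by ring

theorem kronecker_mulVec_kronVec (A : Matrix ι ι R) (B : Matrix κ κ R) (x : ι → R)
    (y : κ → R) : (A ⊗ₖ B) *ᵥ kronVec x y = kronVec (A *ᵥ x) (B *ᵥ y) := by
  funext p
  simp only [kronVec, mulVec, dotProduct, Fintype.sum_prod_type, kroneckerMap_apply,
    Finset.sum_mul_sum]
  exact Finset.sum_congr rfl fun _ _ => Finset.sum_congr rfl fun _ _ => by ring

theorem kronVec_dotProduct_kronVec_of_orthonormal [DecidableEq ι] [DecidableEq κ]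
    {ψ : ι → ι → R} {φ : κ → κ → R}
    (hψ : ∀ r s, ψ r ⬝ᵥ ψ s = if r = s then 1 else 0)
    (hφ : ∀ k l, φ k ⬝ᵥ φ l = if k = l then 1 else 0) (q q' : ι × κ) :
    kronVec (ψ q.1) (φ q.2) ⬝ᵥ kronVec (ψ q'.1) (φ q'.2) = if q = q' then 1 else 0 := by
  rw [kronVec_dotProduct_kronVec, hψ, hφ]
  by_cases h1 : q.1 = q'.1 <;> by_cases h2 : q.2 = q'.2 <;> simp [h1, h2, Prod.ext_iff]

end Kronecker

theorem sum_dotProduct_smul_eq_self_of_orthonormal {R ι : Type*} [CommRing R] [Fintype ι]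
    [DecidableEq ι] {E : ι → ι → R} (hE : ∀ p q, E p ⬝ᵥ E q = if p = q then 1 else 0)
    (v : ι → R) : ∑ q, (v ⬝ᵥ E q) • E q = v := by
  have hU : of E * (of E)ᵀ = 1 := by
    ext p q
    simpa [mul_apply, one_apply, dotProduct] using hE p q
  calc ∑ q, (v ⬝ᵥ E q) • E q = (v ᵥ* (of E)ᵀ) ᵥ* of E := by
        rw [vecMul_eq_sum]; rfl
    _ = v := by rw [vecMul_vecMul, mul_eq_one_comm.mp hU, vecMul_one]

theorem eq_sum_pow_smul_of_mulVec_eigen {R ι : Type*} [CommSemiring R] [Fintype ι]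
    {B : Matrix ι ι R} {E : ι → ι → R} {a : ι → R} (hE : ∀ q, B *ᵥ E q = a q • E q)
    {x : ℕ → ι → R} (hx : ∀ m, x (m + 1) = B *ᵥ x m) {c : ι → R}
    (h0 : x 0 = ∑ q, c q • E q) (m : ℕ) : x m = ∑ q, (c q * a q ^ m) • E q := by
  induction m with
  | zero => simpa using h0
  | succ m ih =>
    rw [hx, ih, mulVec_sum]
    refine Finset.sum_congr rfl fun q _ => ?_
    rw [mulVec_smul, hE, smul_smul, pow_succ]
    ring_nf

theorem exists_lt_one_forall_abs_le_mul {ι : Type*} [Finite ι] {a : ι → ℝ} {q₀ : ι} {A : ℝ}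
    (hA : 0 < A) (ha : ∀ q, q ≠ q₀ → |a q| < A) :
    ∃ δ, 0 ≤ δ ∧ δ < 1 ∧ ∀ q, q ≠ q₀ → |a q| ≤ δ * A := by
  have hev : ∀ᶠ δ in 𝓝[<] (1 : ℝ), 0 ≤ δ ∧ ∀ q, q ≠ q₀ → |a q| ≤ δ * A := by
    refine (eventually_nhdsWithin_of_eventually_nhds (eventually_ge_nhds zero_lt_one)).and
      (eventually_all.mpr fun q => ?_)
    by_cases hq : q = q₀
    · exact Eventually.of_forall fun _ h => absurd hq h
    · have : |a q| / A < 1 := (div_lt_one hA).mpr (ha q hq)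
      filter_upwards [eventually_nhdsWithin_of_eventually_nhds (eventually_gt_nhds this)]
        with δ hδ _
      exact ((div_le_iff₀ hA).mp hδ.le)
  obtain ⟨δ, ⟨hδ0, hδa⟩, hδ1⟩ := (hev.and self_mem_nhdsWithin).exists
  exact ⟨δ, hδ0, hδ1, hδa⟩

theorem norm_sum_sub_dominant_le {ι V : Type*} [Fintype ι] [DecidableEq ι]
    [SeminormedAddCommGroup V] [NormedSpace ℝ V] (E : ι → V) (c a : ι → ℝ) {q₀ : ι}
    {A δ : ℝ} (hA : 0 ≤ A) (hδ : 0 ≤ δ) (ha : ∀ q, q ≠ q₀ → |a q| ≤ δ * A) (m : ℕ) :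
    ‖∑ q, (c q * a q ^ m) • E q - (c q₀ * a q₀ ^ m) • E q₀‖
      ≤ A ^ m * ((∑ q, |c q| * ‖E q‖) * δ ^ m) := by
  rw [← Finset.sum_erase_add _ _ (Finset.mem_univ q₀), add_sub_cancel_right]
  calc ‖∑ q ∈ univ.erase q₀, (c q * a q ^ m) • E q‖
      ≤ ∑ q ∈ univ.erase q₀, |c q| * ‖E q‖ * (δ * A) ^ m := by
        refine (norm_sum_le _ _).trans (Finset.sum_le_sum fun q hq => ?_)
        rw [norm_smul, Real.norm_eq_abs, abs_mul, abs_pow, mul_right_comm]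
        gcongr
        exact ha q (Finset.ne_of_mem_erase hq)
    _ ≤ ∑ q, |c q| * ‖E q‖ * (δ * A) ^ m :=
        Finset.sum_le_sum_of_subset_of_nonneg (Finset.erase_subset _ _) fun _ _ _ => by
          positivity
    _ = A ^ m * ((∑ q, |c q| * ‖E q‖) * δ ^ m) := by
        rw [← Finset.sum_mul, mul_pow]; ring

theorem neg_abs_le_mul_one_sub {μ₀ μ μtop l lmax : ℝ} (hμ₀ : μ₀ ≤ μ) (hμtop : μ ≤ μtop)
    (hl₀ : 0 ≤ l) (hl : l ≤ lmax) (h2 : lmax < 2)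
    (hcond : μtop < |μ₀| * (lmax - 1)) : -|μ₀| ≤ μ * (1 - l) := by
  rcases lt_or_ge μ 0 with hμ | hμ
  · nlinarith [neg_abs_le μ₀]
  · nlinarith [abs_nonneg μ₀]

theorem mul_one_sub_lt {μ₀ μ μtop l lmax : ℝ} (hμ₀neg : μ₀ < 0) (hμ₀ : μ₀ ≤ μ)
    (hμtop : μ ≤ μtop) (hl₀ : 0 ≤ l) (hl : l ≤ lmax) (h1 : 1 < lmax)
    (hcond : μtop < |μ₀| * (lmax - 1)) (hstrict : μ₀ < μ ∨ l < lmax) :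
    μ * (1 - l) < |μ₀| * (lmax - 1) := by
  rw [abs_of_neg hμ₀neg] at hcond ⊢
  rcases lt_or_ge μ 0 with hμ | hμ
  · rcases hstrict with h | h <;> nlinarith
  · nlinarith

theorem abs_one_add_mul_lt {τ ν K L : ℝ} (hτ : 0 < τ) (hlo : -L ≤ ν) (hhi : ν < K)
    (hgap : τ * (L - K) < 2) : |1 + τ * ν| < 1 + τ * K := by
  rw [abs_lt]
  constructor <;> nlinarith

theorem neg_of_div_sub_one_lt_abs {μ₀ μtop lmax : ℝ} (hμ₀ : μ₀ ≤ μtop) (h1 : 1 < lmax)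
    (h2 : lmax < 2) (hcond : μtop / (lmax - 1) < |μ₀|) : μ₀ < 0 := by
  have hK : μtop < |μ₀| * (lmax - 1) := (div_lt_iff₀ (by linarith)).mp hcond
  by_contra! h
  rw [abs_of_nonneg h] at hK
  nlinarith

theorem abs_one_add_mul_mul_one_sub_lt {τ μ₀ μ μtop l lmax : ℝ} (hτ : 0 < τ)
    (hμ₀ : μ₀ ≤ μ) (hμtop : μ ≤ μtop) (hl₀ : 0 ≤ l) (hl : l ≤ lmax) (h1 : 1 < lmax)
    (h2 : lmax < 2) (hcond1 : μtop / (lmax - 1) < |μ₀|)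
    (hcond2 : |μ₀| < 2 / (τ * (2 - lmax))) (hstrict : μ₀ < μ ∨ l < lmax) :
    |1 + τ * (μ * (1 - l))| < 1 + τ * |μ₀| * (lmax - 1) := by
  have hK : μtop < |μ₀| * (lmax - 1) := (div_lt_iff₀ (by linarith)).mp hcond1
  have hgap : τ * (|μ₀| - |μ₀| * (lmax - 1)) < 2 := by
    have := (lt_div_iff₀ (by nlinarith)).mp hcond2
    linarith
  have hμ₀neg := neg_of_div_sub_one_lt_abs (hμ₀.trans hμtop) h1 h2 hcond1
  rw [mul_assoc τ]
  exact abs_one_add_mul_lt hτ (neg_abs_le_mul_one_sub hμ₀ hμtop hl₀ hl h2 hK)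
    (mul_one_sub_lt hμ₀neg hμ₀ hμtop hl₀ hl h1 hK hstrict) hgap

theorem oversharpening_HFD_general (n d : ℕ)
    (Δ : Matrix (Fin n) (Fin n) ℝ) (W : Matrix (Fin d) (Fin d) ℝ)
    (τ : ℝ) (hτ : 0 < τ)
    (φ : Fin n → Fin n → ℝ) (lam : Fin n → ℝ)
    (hφON : ∀ k l, φ k ⬝ᵥ φ l = if k = l then (1 : ℝ) else 0)
    (hφ : ∀ l, Δ.mulVec (φ l) = lam l • φ l)
    (ψ : Fin d → Fin d → ℝ) (mu : Fin d → ℝ)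
    (hψON : ∀ r s, ψ r ⬝ᵥ ψ s = if r = s then (1 : ℝ) else 0)
    (hψ : ∀ r, W.mulVec (ψ r) = mu r • ψ r)
    -- the graph spectrum: eigenvalues in [0, λ_{n−1}], 1 < λ_{n−1} < 2 (connected,
    -- non-bipartite), largest eigenvalue simple
    (lmax : Fin n) (hlmax : ∀ l, lam l ≤ lam lmax)
    (hlmaxSimple : ∀ l, l ≠ lmax → lam l < lam lmax)
    (hlamNonneg : ∀ l, 0 ≤ lam l) (hlam1 : 1 < lam lmax) (hlam2 : lam lmax < 2)
    -- the channel-mixing spectrum: μ_0 smallest and simple, μ_{d−1} largest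
    (r0 : Fin d) (hr0 : ∀ r, mu r0 ≤ mu r) (hr0Simple : ∀ r, r ≠ r0 → mu r0 < mu r)
    (rtop : Fin d) (hrtop : ∀ r, mu r ≤ mu rtop)
    -- the assumptions: μ_{d−1}/(λ_{n−1}−1) < |μ_0| < 2/(τ(2−λ_{n−1}))
    (hcond1 : mu rtop / (lam lmax - 1) < |mu r0|)
    (hcond2 : |mu r0| < 2 / (τ * (2 - lam lmax)))
    (vecF : ℕ → Fin d × Fin n → ℝ)
    (hrec : ∀ m, vecF (m + 1) =
      vecF m + τ • (W ⊗ₖ ((1 : Matrix (Fin n) (Fin n) ℝ) - Δ)).mulVec (vecF m)) :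
    ∃ δ C : ℝ, 0 ≤ δ ∧ δ < 1 ∧ 0 ≤ C ∧ ∀ m : ℕ,
      ‖vecF m - ((1 + τ * |mu r0| * (lam lmax - 1)) ^ m *
          (vecF 0 ⬝ᵥ fun p : Fin d × Fin n => ψ r0 p.1 * φ lmax p.2)) •
            (fun p : Fin d × Fin n => ψ r0 p.1 * φ lmax p.2)‖
        ≤ (1 + τ * |mu r0| * (lam lmax - 1)) ^ m * (C * δ ^ m) := by
  set A := 1 + τ * |mu r0| * (lam lmax - 1)
  let E : Fin d × Fin n → Fin d × Fin n → ℝ := fun q => kronVec (ψ q.1) (φ q.2)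
  let a : Fin d × Fin n → ℝ := fun q => 1 + τ * (mu q.1 * (1 - lam q.2))
  have hE : ∀ q, (1 + τ • W ⊗ₖ (1 - Δ)) *ᵥ E q = a q • E q := fun q => by
    rw [add_mulVec, one_mulVec, smul_mulVec, kronecker_mulVec_kronVec, hψ, sub_mulVec,
      one_mulVec, hφ]
    funext p
    simp only [E, a, kronVec, Pi.add_apply, Pi.smul_apply, Pi.sub_apply, smul_eq_mul]
    ring
  have hx : ∀ m, vecF (m + 1) = (1 + τ • W ⊗ₖ (1 - Δ)) *ᵥ vecF m := fun m => by
    rw [hrec, add_mulVec, one_mulVec, smul_mulVec]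
  have hform := eq_sum_pow_smul_of_mulVec_eigen hE hx
    (sum_dotProduct_smul_eq_self_of_orthonormal
      (kronVec_dotProduct_kronVec_of_orthonormal hψON hφON) (vecF 0)).symm
  have hgap : ∀ q, q ≠ (r0, lmax) → |a q| < A := by
    rintro ⟨r, l⟩ hq
    refine abs_one_add_mul_mul_one_sub_lt hτ (hr0 r) (hrtop r) (hlamNonneg l) (hlmax l)
      hlam1 hlam2 hcond1 hcond2 ?_
    by_cases hr : r = r0
    · exact .inr (hlmaxSimple l fun hl => hq (by rw [hr, hl]))
    · exact .inl (hr0Simple r hr)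
  have hA : 0 < A := by positivity
  obtain ⟨δ, hδ0, hδ1, hδ⟩ := exists_lt_one_forall_abs_le_mul hA hgap
  have hdom : a (r0, lmax) = A := by
    simp only [a, A]
    rw [abs_of_neg (neg_of_div_sub_one_lt_abs (hr0 rtop) hlam1 hlam2 hcond1)]
    ring
  refine ⟨δ, ∑ q, |vecF 0 ⬝ᵥ E q| * ‖E q‖, hδ0, hδ1, by positivity, fun m => ?_⟩
  have := norm_sum_sub_dominant_le E (fun q => vecF 0 ⬝ᵥ E q) a hA.le hδ0 hδ m
  rw [hdom, ← hform] at this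
  calc _ = ‖vecF m - (vecF 0 ⬝ᵥ E (r0, lmax) * A ^ m) • E (r0, lmax)‖ := by
        rw [mul_comm]; rfl
    _ ≤ _ := this

/-- Over-sharpening (HFD) regime: for the residual update
vec(F(t+τ)) = (I + τ W ⊗ Ā)vec(F(t)) with Ā = I − Δ, if
μ_{d−1}/(λ_{n−1}−1) < |μ_0| < 2/(τ(2−λ_{n−1})), then there exists δ < 1 such that
vec(F(mτ)) = (1 + τ|μ_0|(λ_{n−1}−1))^m ( c_{0,n−1}(0) ψ_0 ⊗ φ_{n−1} + O(δ^m) ). -/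
theorem oversharpening_HFD (n d : ℕ)
    (Δ : Matrix (Fin n) (Fin n) ℝ) (W : Matrix (Fin d) (Fin d) ℝ) (hW : W.IsSymm)
    (τ : ℝ) (hτ : 0 < τ)
    (φ : Fin n → Fin n → ℝ) (lam : Fin n → ℝ)
    (hφON : ∀ k l, φ k ⬝ᵥ φ l = if k = l then (1 : ℝ) else 0)
    (hφ : ∀ l, Δ.mulVec (φ l) = lam l • φ l)
    (ψ : Fin d → Fin d → ℝ) (mu : Fin d → ℝ)
    (hψON : ∀ r s, ψ r ⬝ᵥ ψ s = if r = s then (1 : ℝ) else 0)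
    (hψ : ∀ r, W.mulVec (ψ r) = mu r • ψ r)
    -- the graph spectrum: eigenvalues in [0, λ_{n−1}], 1 < λ_{n−1} < 2 (connected,
    -- non-bipartite), largest eigenvalue simple
    (lmax : Fin n) (hlmax : ∀ l, lam l ≤ lam lmax)
    (hlmaxSimple : ∀ l, l ≠ lmax → lam l < lam lmax)
    (hlamNonneg : ∀ l, 0 ≤ lam l) (hlam1 : 1 < lam lmax) (hlam2 : lam lmax < 2)
    -- the channel-mixing spectrum: μ_0 smallest and simple, μ_{d−1} largest
    (r0 : Fin d) (hr0 : ∀ r, mu r0 ≤ mu r) (hr0Simple : ∀ r, r ≠ r0 → mu r0 < mu r)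
    (rtop : Fin d) (hrtop : ∀ r, mu r ≤ mu rtop)
    -- the assumptions: μ_{d−1}/(λ_{n−1}−1) < |μ_0| < 2/(τ(2−λ_{n−1}))
    (hcond1 : mu rtop / (lam lmax - 1) < |mu r0|)
    (hcond2 : |mu r0| < 2 / (τ * (2 - lam lmax)))
    (vecF : ℕ → Fin d × Fin n → ℝ)
    (hrec : ∀ m, vecF (m + 1) =
      vecF m + τ • (W ⊗ₖ ((1 : Matrix (Fin n) (Fin n) ℝ) - Δ)).mulVec (vecF m)) :
    ∃ δ C : ℝ, 0 ≤ δ ∧ δ < 1 ∧ 0 ≤ C ∧ ∀ m : ℕ,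
      ‖vecF m - ((1 + τ * |mu r0| * (lam lmax - 1)) ^ m *
          (vecF 0 ⬝ᵥ fun p : Fin d × Fin n => ψ r0 p.1 * φ lmax p.2)) •
            (fun p : Fin d × Fin n => ψ r0 p.1 * φ lmax p.2)‖
        ≤ (1 + τ * |mu r0| * (lam lmax - 1)) ^ m * (C * δ ^ m) :=
  oversharpening_HFD_general n d Δ W τ hτ φ lam hφON hφ ψ mu hψON hψ lmax hlmax hlmaxSimple
    hlamNonneg hlam1 hlam2 r0 hr0 hr0Simple rtop hrtop hcond1 hcond2 vecF hrec
end

section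
/- Without residual connection, the dynamics F(t+τ) = τ Ā F(t) W on a connected non-bipartite graph is always low-frequency dominant: for almost every F(0), the normalized Dirichlet energy E^Dir(F(mτ))/‖F(mτ)‖² → 0 as m → ∞, regardless of the symmetric matrix W. -/
/-!
In the orthonormal eigenbases `φ` of `Δ` and `ψ` of `W`, the coefficient of `F m` on
`φ l ⊗ ψ s` is multiplied by `τ (1 - λ_l) μ_s` at every step, and the Dirichlet energy and
the squared norm become `∑ λ_l c_{ls}²` and `∑ c_{ls}²`. The mode `φ_{l₀} ⊗ ψ_r` carries no
energy, has a nonzero initial coefficient, and grows at the rate `τ |μ_r|`, strictly faster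
than every mode with `λ_l ≠ 0` because `|1 - λ_l| < 1` for `0 < λ_l < 2`. Dividing by its
squared coefficient bounds the ratio by a finite sum of geometric sequences with ratio below one.
-/

open Matrix Finset Filter Topology

namespace Matrix

section Orthonormal

variable {n : Type*} [Fintype n] [DecidableEq n]

theorem of_mul_transpose_eq_one {φ : n → n → ℝ}
    (hφ : ∀ k l, φ k ⬝ᵥ φ l = if k = l then (1 : ℝ) else 0) :
    of φ * (of φ)ᵀ = 1 := by
  ext k l
  simpa [mul_apply, one_apply, dotProduct] using hφ k l

theorem mul_transpose_of_eq_transpose_of_mul_diagonal {A : Matrix n n ℝ} {φ : n → n → ℝ}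
    {lam : n → ℝ} (hA : ∀ l, A *ᵥ φ l = lam l • φ l) :
    A * (of φ)ᵀ = (of φ)ᵀ * diagonal lam := by
  ext i l
  rw [mul_diagonal]
  simpa [mul_apply, mulVec, dotProduct, mul_comm] using congrFun (hA l) i

theorem eq_transpose_mul_diagonal_mul_of_orthonormal {A : Matrix n n ℝ} {φ : n → n → ℝ}
    {lam : n → ℝ} (hφ : ∀ k l, φ k ⬝ᵥ φ l = if k = l then (1 : ℝ) else 0)
    (hA : ∀ l, A *ᵥ φ l = lam l • φ l) :
    A = (of φ)ᵀ * diagonal lam * of φ := by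
  rw [← mul_transpose_of_eq_transpose_of_mul_diagonal hA, Matrix.mul_assoc,
    mul_eq_one_comm.mp (of_mul_transpose_eq_one hφ), Matrix.mul_one]

theorem of_mul_eq_diagonal_mul_of_orthonormal {A : Matrix n n ℝ} {φ : n → n → ℝ}
    {lam : n → ℝ} (hφ : ∀ k l, φ k ⬝ᵥ φ l = if k = l then (1 : ℝ) else 0)
    (hA : ∀ l, A *ᵥ φ l = lam l • φ l) :
    of φ * A = diagonal lam * of φ := by
  rw [eq_transpose_mul_diagonal_mul_of_orthonormal hφ hA, ← Matrix.mul_assoc, ← Matrix.mul_assoc,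
    of_mul_transpose_eq_one hφ, Matrix.one_mul]

theorem eigenvalue_ne_zero_of_forall_abs_le {A : Matrix n n ℝ} (hA₀ : A ≠ 0) {φ : n → n → ℝ}
    {lam : n → ℝ} (hφ : ∀ k l, φ k ⬝ᵥ φ l = if k = l then (1 : ℝ) else 0)
    (hA : ∀ l, A *ᵥ φ l = lam l • φ l) {r : n} (hr : ∀ s, |lam s| ≤ |lam r|) : lam r ≠ 0 := by
  intro h0
  have hlam : lam = 0 := funext fun s => abs_nonpos_iff.1 (by simpa [h0] using hr s)
  exact hA₀ (by simp [eq_transpose_mul_diagonal_mul_of_orthonormal hφ hA, hlam])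

end Orthonormal

theorem mul_one_sub_eq_diagonal_mul {m n R : Type*} [Fintype m] [Fintype n] [DecidableEq m]
    [DecidableEq n] [Ring R] {Φ : Matrix m n R} {A : Matrix n n R} {α : m → R}
    (h : Φ * A = diagonal α * Φ) : Φ * (1 - A) = diagonal (fun i => 1 - α i) * Φ := by
  rw [Matrix.mul_sub, h, Matrix.mul_one, ← diagonal_sub, diagonal_one, Matrix.sub_mul,
    Matrix.one_mul]

section Trace

variable {m n k l : Type*} [Fintype m] [Fintype n] [Fintype k] [Fintype l]

theorem trace_transpose_mul_self (A : Matrix m n ℝ) :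
    (Aᵀ * A).trace = ∑ i, ∑ j, A i j ^ 2 := by
  rw [Finset.sum_comm]
  simp [trace, mul_apply, sq]

theorem trace_transpose_mul_diagonal_mul [DecidableEq m] (w : m → ℝ) (A : Matrix m n ℝ) :
    (Aᵀ * diagonal w * A).trace = ∑ i, ∑ j, w i * A i j ^ 2 := by
  rw [Finset.sum_comm]
  simp [trace, mul_apply, diagonal_apply, sq, mul_assoc, mul_left_comm]

theorem trace_transpose_mul_mul_of_transpose_mul_eq_one [DecidableEq k] {Ψ : Matrix l k ℝ}
    (hΨ : Ψᵀ * Ψ = 1) (Φ : Matrix m n ℝ) (F : Matrix n k ℝ) (X : Matrix m m ℝ) :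
    ((Φ * F * Ψᵀ)ᵀ * X * (Φ * F * Ψᵀ)).trace = (Fᵀ * (Φᵀ * X * Φ) * F).trace := by
  calc ((Φ * F * Ψᵀ)ᵀ * X * (Φ * F * Ψᵀ)).trace
      = (Ψ * (Fᵀ * (Φᵀ * X * Φ) * F * Ψᵀ)).trace := by
        simp only [transpose_mul, transpose_transpose, Matrix.mul_assoc]
    _ = (Fᵀ * (Φᵀ * X * Φ) * F * Ψᵀ * Ψ).trace := trace_mul_comm _ _
    _ = (Fᵀ * (Φᵀ * X * Φ) * F).trace := by rw [Matrix.mul_assoc _ Ψᵀ, hΨ, Matrix.mul_one]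

end Trace

theorem mul_mul_apply_eq_pow_mul {m n k l : Type*} [Fintype m] [Fintype n] [Fintype k]
    [Fintype l] [DecidableEq k] [DecidableEq l] {A : Matrix m m ℝ} {B : Matrix n n ℝ}
    {Φ : Matrix k m ℝ} {Ψ : Matrix n l ℝ} {α : k → ℝ} {β : l → ℝ} {τ : ℝ} {F : ℕ → Matrix m n ℝ}
    (hA : Φ * A = diagonal α * Φ) (hB : B * Ψ = Ψ * diagonal β)
    (hF : ∀ t, F (t + 1) = τ • (A * F t * B)) (t : ℕ) (i : k) (j : l) :
    (Φ * F t * Ψ) i j = (τ * α i * β j) ^ t * (Φ * F 0 * Ψ) i j := by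
  induction t with
  | zero => simp
  | succ t ih =>
    have hstep : Φ * F (t + 1) * Ψ = τ • (diagonal α * (Φ * F t * Ψ) * diagonal β) := by
      rw [hF, Matrix.mul_smul, Matrix.smul_mul]
      simp only [← Matrix.mul_assoc, hA]
      simp only [Matrix.mul_assoc, hB]
    rw [hstep, Matrix.smul_apply, mul_diagonal, diagonal_mul, ih, smul_eq_mul]
    ring

theorem mul_mul_transpose_apply_eq_dotProduct {m n k l : Type*} [Fintype m] [Fintype n]
    (Φ : Matrix k m ℝ) (F : Matrix m n ℝ) (Ψ : Matrix l n ℝ) (i : k) (j : l) :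
    (Φ * F * Ψᵀ) i j = (fun p : n × m => F p.2 p.1) ⬝ᵥ fun p => Ψ j p.1 * Φ i p.2 := by
  simp only [dotProduct, Fintype.sum_prod_type, mul_apply, transpose_apply, sum_mul]
  exact sum_congr rfl fun s _ => sum_congr rfl fun i _ => by ring

end Matrix

theorem abs_mul_one_sub_mul_lt {τ lam μ μ₀ : ℝ} (hτ : 0 < τ) (hlam : 0 < lam) (hlam₂ : lam < 2)
    (hμ : |μ| ≤ |μ₀|) (hμ₀ : μ₀ ≠ 0) : |τ * (1 - lam) * μ| < |τ * μ₀| := by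
  have hcontr : |1 - lam| < 1 := abs_sub_lt_iff.2 ⟨by linarith, by linarith⟩
  rw [abs_mul, abs_mul, abs_mul, abs_of_pos hτ]
  calc τ * |1 - lam| * |μ| ≤ τ * |1 - lam| * |μ₀| := mul_le_mul_of_nonneg_left hμ (by positivity)
    _ < τ * 1 * |μ₀| := by gcongr
    _ = τ * |μ₀| := by ring

theorem tendsto_weighted_ratio_of_dominant {ι : Type*} [Fintype ι] {w ρ c : ι → ℝ} {i₀ : ι}
    (hw : ∀ i, 0 ≤ w i) (hc₀ : c i₀ ≠ 0)
    (hρ : ∀ i, w i ≠ 0 → |ρ i| < |ρ i₀|) :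
    Tendsto (fun t => (∑ i, w i * (ρ i ^ t * c i) ^ 2) / ∑ i, (ρ i ^ t * c i) ^ 2)
      atTop (𝓝 0) := by
  have hnum : ∀ t, 0 ≤ ∑ i, w i * (ρ i ^ t * c i) ^ 2 := fun t =>
    sum_nonneg fun i _ => mul_nonneg (hw i) (sq_nonneg _)
  by_cases hρ₀ : ρ i₀ = 0
  · have hw0 : ∀ i, w i = 0 := fun i => by
      by_contra hwi
      exact (abs_nonneg (ρ i)).not_gt (by simpa [hρ₀] using hρ i hwi)
    simp [hw0]
  have hden : ∀ t, 0 < (ρ i₀ ^ t * c i₀) ^ 2 := fun t => by positivity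
  have hbound : ∀ t, (∑ i, w i * (ρ i ^ t * c i) ^ 2) / ∑ i, (ρ i ^ t * c i) ^ 2 ≤
      ∑ i, w i * ((ρ i / ρ i₀) ^ t * (c i / c i₀)) ^ 2 := fun t => by
    calc (∑ i, w i * (ρ i ^ t * c i) ^ 2) / ∑ i, (ρ i ^ t * c i) ^ 2
        ≤ (∑ i, w i * (ρ i ^ t * c i) ^ 2) / (ρ i₀ ^ t * c i₀) ^ 2 :=
          div_le_div_of_nonneg_left (hnum t) (hden t)
            (single_le_sum (f := fun i => (ρ i ^ t * c i) ^ 2) (fun i _ => sq_nonneg _)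
              (mem_univ i₀))
      _ = ∑ i, w i * ((ρ i / ρ i₀) ^ t * (c i / c i₀)) ^ 2 := by
          rw [sum_div]
          refine sum_congr rfl fun i _ => ?_
          rw [div_pow]
          field_simp
  have hlim : Tendsto (fun t => ∑ i, w i * ((ρ i / ρ i₀) ^ t * (c i / c i₀)) ^ 2)
      atTop (𝓝 0) := by
    rw [show (0 : ℝ) = ∑ _i : ι, 0 by simp]
    refine tendsto_finsetSum _ fun i _ => ?_
    by_cases hwi : w i = 0
    · simp [hwi]
    have hcontr : |ρ i / ρ i₀| < 1 := by
      rw [abs_div, div_lt_one (abs_pos.2 hρ₀)]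
      exact hρ i hwi
    simpa using (((tendsto_pow_atTop_nhds_zero_of_abs_lt_one hcontr).mul_const
      (c i / c i₀)).pow 2).const_mul (w i)
  exact tendsto_of_tendsto_of_tendsto_of_le_of_le tendsto_const_nhds hlim
    (fun t => div_nonneg (hnum t) (sum_nonneg fun i _ => sq_nonneg _)) hbound

theorem no_residual_always_LFD_general (n d : ℕ)
    (Δ : Matrix (Fin n) (Fin n) ℝ)
    (W : Matrix (Fin d) (Fin d) ℝ) (hWne : W ≠ 0)
    (τ : ℝ) (hτ : 0 < τ)
    (φ : Fin n → Fin n → ℝ) (lam : Fin n → ℝ)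
    (hφON : ∀ k l, φ k ⬝ᵥ φ l = if k = l then (1 : ℝ) else 0)
    (hφ : ∀ l, Δ.mulVec (φ l) = lam l • φ l)
    (ψ : Fin d → Fin d → ℝ) (mu : Fin d → ℝ)
    (hψON : ∀ r s, ψ r ⬝ᵥ ψ s = if r = s then (1 : ℝ) else 0)
    (hψ : ∀ r, W.mulVec (ψ r) = mu r • ψ r)
    -- connected: λ_0 = 0 simple; non-bipartite: all eigenvalues < 2
    (l0 : Fin n) (hl0 : lam l0 = 0)
    (hconn : ∀ l, l ≠ l0 → 0 < lam l)
    (hlam2 : ∀ l, lam l < 2)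
    (F : ℕ → Matrix (Fin n) (Fin d) ℝ)
    (hrec : ∀ m, F (m + 1) = τ • (((1 : Matrix (Fin n) (Fin n) ℝ) - Δ) * F m * W))
    -- generic initial condition: nonzero component on the dominant eigenspace
    (hgen : ∃ r : Fin d, (∀ s, |mu s| ≤ |mu r|) ∧
      ((fun p : Fin d × Fin n => F 0 p.2 p.1) ⬝ᵥ
        fun p : Fin d × Fin n => ψ r p.1 * φ l0 p.2) ≠ 0) :
    Tendsto (fun m => ((F m)ᵀ * Δ * F m).trace / ∑ i, ∑ r, (F m i r) ^ 2)
      atTop (nhds 0) := by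
  obtain ⟨r, hr, hc⟩ := hgen
  set Φ := of φ
  set Ψ := of ψ
  have hΔ : Δ = Φᵀ * diagonal lam * Φ := eq_transpose_mul_diagonal_mul_of_orthonormal hφON hφ
  have hΦ : Φ * Φᵀ = 1 := of_mul_transpose_eq_one hφON
  have hΨ : Ψᵀ * Ψ = 1 := mul_eq_one_comm.mp (of_mul_transpose_eq_one hψON)
  set G := fun t => Φ * F t * Ψᵀ
  have hG : ∀ t l s, G t l s = (τ * (1 - lam l) * mu s) ^ t * G 0 l s :=
    mul_mul_apply_eq_pow_mul (mul_one_sub_eq_diagonal_mul (of_mul_eq_diagonal_mul_of_orthonormal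
      hφON hφ)) (mul_transpose_of_eq_transpose_of_mul_diagonal hψ) hrec
  have hE : ∀ t, ((F t)ᵀ * Δ * F t).trace = ∑ l, ∑ s, lam l * G t l s ^ 2 := fun t => by
    rw [← trace_transpose_mul_diagonal_mul, trace_transpose_mul_mul_of_transpose_mul_eq_one hΨ,
      ← hΔ]
  have hN : ∀ t, ∑ i, ∑ s, F t i s ^ 2 = ∑ l, ∑ s, G t l s ^ 2 := fun t => by
    have h := trace_transpose_mul_mul_of_transpose_mul_eq_one hΨ Φ (F t) 1
    rw [Matrix.mul_one, Matrix.mul_one, mul_eq_one_comm.mp hΦ, Matrix.mul_one] at h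
    rw [← trace_transpose_mul_self, ← trace_transpose_mul_self, h]
  have hlam : ∀ p : Fin n × Fin d, 0 ≤ lam p.1 := fun p => by
    rcases eq_or_ne p.1 l0 with h | h
    · rw [h, hl0]
    · exact (hconn _ h).le
  have hdom : ∀ p : Fin n × Fin d, lam p.1 ≠ 0 →
      |τ * (1 - lam p.1) * mu p.2| < |τ * (1 - lam l0) * mu r| := by
    rintro ⟨l, s⟩ hl
    rw [hl0, sub_zero, mul_one]
    exact abs_mul_one_sub_mul_lt hτ (hconn l fun h => hl (h ▸ hl0)) (hlam2 l) (hr s)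
      (eigenvalue_ne_zero_of_forall_abs_le hWne hψON hψ hr)
  refine (tendsto_weighted_ratio_of_dominant (ρ := fun p => τ * (1 - lam p.1) * mu p.2)
    (c := fun p => G 0 p.1 p.2) (i₀ := (l0, r)) hlam
    ((mul_mul_transpose_apply_eq_dotProduct Φ (F 0) Ψ l0 r).trans_ne hc) hdom).congr fun t => ?_
  rw [hE, hN]
  simp only [hG t, Fintype.sum_prod_type]

/-- Without the residual connection, the dynamics F(t+τ) = τ Ā F(t) W on a
connected non-bipartite graph is always low-frequency dominant: for (almost
every) F(0) whose projection onto (top-modulus eigenspace of W) ⊗ ker Δ is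
nonzero, E^Dir(F(mτ))/‖F(mτ)‖² → 0 as m → ∞, regardless of the symmetric W. -/
theorem no_residual_always_LFD (n d : ℕ)
    (Δ : Matrix (Fin n) (Fin n) ℝ)
    (W : Matrix (Fin d) (Fin d) ℝ) (hW : W.IsSymm) (hWne : W ≠ 0)
    (τ : ℝ) (hτ : 0 < τ)
    (φ : Fin n → Fin n → ℝ) (lam : Fin n → ℝ)
    (hφON : ∀ k l, φ k ⬝ᵥ φ l = if k = l then (1 : ℝ) else 0)
    (hφ : ∀ l, Δ.mulVec (φ l) = lam l • φ l)
    (ψ : Fin d → Fin d → ℝ) (mu : Fin d → ℝ)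
    (hψON : ∀ r s, ψ r ⬝ᵥ ψ s = if r = s then (1 : ℝ) else 0)
    (hψ : ∀ r, W.mulVec (ψ r) = mu r • ψ r)
    -- connected: λ_0 = 0 simple; non-bipartite: all eigenvalues < 2
    (l0 : Fin n) (hl0 : lam l0 = 0)
    (hconn : ∀ l, l ≠ l0 → 0 < lam l)
    (hlam2 : ∀ l, lam l < 2)
    (F : ℕ → Matrix (Fin n) (Fin d) ℝ)
    (hrec : ∀ m, F (m + 1) = τ • (((1 : Matrix (Fin n) (Fin n) ℝ) - Δ) * F m * W))
    -- generic initial condition: nonzero component on the dominant eigenspace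
    (hgen : ∃ r : Fin d, (∀ s, |mu s| ≤ |mu r|) ∧
      ((fun p : Fin d × Fin n => F 0 p.2 p.1) ⬝ᵥ
        fun p : Fin d × Fin n => ψ r p.1 * φ l0 p.2) ≠ 0) :
    Tendsto (fun m => ((F m)ᵀ * Δ * F m).trace / ∑ i, ∑ r, (F m i r) ^ 2)
      atTop (nhds 0) :=
  no_residual_always_LFD_general n d Δ W hWne τ hτ φ lam hφON hφ ψ mu hψON hψ l0 hl0 hconn hlam2 F
    hrec hgen
end

section
/- If σ: ℝ → ℝ satisfies x·σ(x) ≥ 0 for all x, and F(t) solves the nonlinear ODE vec(Ḟ(t)) = σ(−(1/2)∇E_θ(vec(F(t)))) applied componentwise, with E_θ(F) = ⟨vec(F), M vec(F) + 2 b⟩ for a symmetric matrix M and fixed vector b, then t ↦ E_θ(F(t)) is non-increasing. -/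
/-! Since `M` is symmetric, the chain rule gives `d/dt E(F t) = 2 ⟨M F + b, Ḟ⟩ = -2 ⟨Z, σ ∘ Z⟩`
with `Z = -(M F + b)`, a sum of terms `-2 z σ(z) ≤ 0`. -/

open Matrix

section Calculus

variable {𝕜 ι : Type*} [NontriviallyNormedField 𝕜] [Fintype ι] {f g : 𝕜 → ι → 𝕜} {f' g' : ι → 𝕜}
  {t : 𝕜}

theorem HasDerivAt.dotProduct (hf : HasDerivAt f f' t) (hg : HasDerivAt g g' t) :
    HasDerivAt (fun s => f s ⬝ᵥ g s) (f' ⬝ᵥ g t + f t ⬝ᵥ g') t := by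
  rw [_root_.dotProduct, _root_.dotProduct, ← Finset.sum_add_distrib]
  exact HasDerivAt.fun_sum fun i _ => (hasDerivAt_pi.mp hf i).mul (hasDerivAt_pi.mp hg i)

theorem HasDerivAt.mulVec {κ : Type*} (A : Matrix κ ι 𝕜) (hf : HasDerivAt f f' t) :
    HasDerivAt (fun s => A *ᵥ f s) (A *ᵥ f') t :=
  hasDerivAt_pi.mpr fun i => by
    have h := (hasDerivAt_const t (A i)).dotProduct hf
    rwa [zero_dotProduct, zero_add] at h

end Calculus

theorem Matrix.IsSymm.dotProduct_mulVec_comm {R ι : Type*} [CommSemiring R] [Fintype ι]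
    {A : Matrix ι ι R} (hA : A.IsSymm) (x y : ι → R) : x ⬝ᵥ (A *ᵥ y) = (A *ᵥ x) ⬝ᵥ y := by
  rw [dotProduct_mulVec, ← mulVec_transpose, hA.eq]

theorem dotProduct_comp_nonneg {ι : Type*} [Fintype ι] {σ : ℝ → ℝ} (hσ : ∀ x, 0 ≤ x * σ x)
    (z : ι → ℝ) : 0 ≤ z ⬝ᵥ fun i => σ (z i) :=
  Finset.sum_nonneg fun i _ => hσ (z i)

def quadraticEnergy {R ι : Type*} [CommSemiring R] [Fintype ι] (M : Matrix ι ι R) (b x : ι → R) :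
    R :=
  x ⬝ᵥ (M *ᵥ x + (2 : R) • b)

theorem Matrix.IsSymm.hasDerivAt_quadraticEnergy {𝕜 ι : Type*} [NontriviallyNormedField 𝕜]
    [Fintype ι] {M : Matrix ι ι 𝕜} (hM : M.IsSymm) (b : ι → 𝕜) {F : 𝕜 → ι → 𝕜} {v : ι → 𝕜}
    {t : 𝕜} (hF : HasDerivAt F v t) :
    HasDerivAt (fun s => quadraticEnergy M b (F s)) (2 * ((M *ᵥ F t + b) ⬝ᵥ v)) t := by
  refine (hF.dotProduct ((hF.mulVec M).add_const ((2 : 𝕜) • b))).congr_deriv ?_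
  rw [hM.dotProduct_mulVec_comm, dotProduct_comm v]
  simp only [add_dotProduct, smul_dotProduct, smul_eq_mul]
  ring

/-- If x·σ(x) ≥ 0 and F solves the nonlinear ODE
vec(Ḟ(t)) = σ(−(1/2)∇E_θ(vec F(t))) componentwise, where
E_θ(x) = ⟨x, M x + 2b⟩ with M symmetric, then t ↦ E_θ(F(t)) is non-increasing. -/
theorem nonlinear_energy_nonincreasing (N : ℕ)
    (M : Matrix (Fin N) (Fin N) ℝ) (hM : M.IsSymm)
    (b : Fin N → ℝ) (σ : ℝ → ℝ) (hσ : ∀ x : ℝ, 0 ≤ x * σ x)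
    (F : ℝ → Fin N → ℝ)
    (hF : ∀ t, HasDerivAt F (fun i => σ ((-(M.mulVec (F t) + b)) i)) t) :
    ∀ s t : ℝ, s ≤ t →
      F t ⬝ᵥ (M.mulVec (F t) + (2 : ℝ) • b) ≤ F s ⬝ᵥ (M.mulVec (F s) + (2 : ℝ) • b) := by
  intro s t hst
  refine antitone_of_hasDerivAt_nonpos (fun u => hM.hasDerivAt_quadraticEnergy b (hF u))
    (fun u => ?_) hst
  have hZ := dotProduct_comp_nonneg hσ (-(M *ᵥ F u + b))
  rw [neg_dotProduct] at hZ
  dsimp only [Pi.zero_apply]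
  linarith
end

section
/- For the discrete nonlinear update vec(F(t+τ)) = vec(F(t)) + τσ(Z(t)) with Z(t) = −(M vec(F(t)) + b), M symmetric, and σ componentwise with xσ(x) ≥ 0, the energy E_θ(F) = ⟨vec(F), M vec(F) + 2b⟩ satisfies E_θ(F(t+τ)) − E_θ(F(t)) ≤ c‖F(t+τ) − F(t)‖², where c is the largest eigenvalue of M if M has a positive eigenvalue and c = 0 otherwise. -/
/-!
Write `x' = x + d` with `d = τ σ(Z)`, `Z = -(M x + b)`. By symmetry of `M` the energy changes by
exactly `⟨d, M d⟩ - 2 ⟨d, Z⟩`. The second term is `-2τ ⟨σ(Z), Z⟩ ≤ 0` since `z σ(z) ≥ 0`, and the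
first is at most `c ‖d‖²`, because `M ≤ c • 1` in the Loewner order once every eigenvalue of `M`
is at most `c`.
-/

open Matrix
open scoped MatrixOrder

theorem Matrix.IsHermitian.re_dotProduct_mulVec_le {𝕜 n : Type*} [RCLike 𝕜] [Fintype n]
    [DecidableEq n] {M : Matrix n n 𝕜} (hM : M.IsHermitian) {c : ℝ}
    (hc : ∀ i, hM.eigenvalues i ≤ c) (x : n → 𝕜) :
    RCLike.re (star x ⬝ᵥ M *ᵥ x) ≤ c * RCLike.re (star x ⬝ᵥ x) := by
  have hle : M ≤ algebraMap ℝ (Matrix n n 𝕜) c := by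
    refine le_algebraMap_of_spectrum_le (fun r hr => ?_) hM.isSelfAdjoint
    rw [hM.spectrum_real_eq_range_eigenvalues] at hr
    obtain ⟨i, rfl⟩ := hr
    exact hc i
  simpa [sub_mulVec, dotProduct_sub, Algebra.algebraMap_eq_smul_one, smul_mulVec,
    dotProduct_smul, RCLike.smul_re] using (le_iff.mp hle).re_dotProduct_nonneg x

theorem Matrix.IsSymm.dotProduct_mulVec_comm_s13 {R n : Type*} [CommSemiring R] [Fintype n]
    {M : Matrix n n R} (hM : M.IsSymm) (u v : n → R) : u ⬝ᵥ M *ᵥ v = v ⬝ᵥ M *ᵥ u := by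
  rw [dotProduct_mulVec, ← mulVec_transpose, hM.eq, dotProduct_comm]

theorem Matrix.IsSymm.energy_add_sub {R n : Type*} [CommRing R] [Fintype n]
    {M : Matrix n n R} (hM : M.IsSymm) (b x d : n → R) :
    (x + d) ⬝ᵥ (M *ᵥ (x + d) + (2 : R) • b) - x ⬝ᵥ (M *ᵥ x + (2 : R) • b)
      = d ⬝ᵥ M *ᵥ d + 2 * (d ⬝ᵥ (M *ᵥ x + b)) := by
  simp only [mulVec_add, dotProduct_add, add_dotProduct, dotProduct_smul, smul_eq_mul,
    hM.dotProduct_mulVec_comm_s13 x d]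
  ring

theorem smul_comp_dotProduct_nonneg {n : Type*} [Fintype n] {σ : ℝ → ℝ}
    (hσ : ∀ x, 0 ≤ x * σ x) {τ : ℝ} (hτ : 0 ≤ τ) (z : n → ℝ) :
    0 ≤ (τ • fun i => σ (z i)) ⬝ᵥ z :=
  Finset.sum_nonneg fun i _ =>
    (mul_nonneg hτ (hσ (z i))).trans_eq (by simp only [Pi.smul_apply, smul_eq_mul]; ring)

/-- Discrete nonlinear update: for x' = x + τ σ(Z) with Z = −(Mx + b),
M symmetric and xσ(x) ≥ 0, the energy E_θ(x) = ⟨x, Mx + 2b⟩ satisfies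
E_θ(x') − E_θ(x) ≤ c ‖x' − x‖², where c is the largest eigenvalue of M if M has
a positive eigenvalue and c = 0 otherwise (i.e. c = max(0, λ_max(M))). -/
theorem discrete_nonlinear_energy_inequality (N : ℕ)
    (M : Matrix (Fin N) (Fin N) ℝ) (hM : M.IsHermitian)
    (b : Fin N → ℝ) (σ : ℝ → ℝ) (hσ : ∀ x : ℝ, 0 ≤ x * σ x)
    (τ : ℝ) (hτ : 0 < τ)
    (c : ℝ) (hc : IsGreatest (insert (0 : ℝ) (Set.range hM.eigenvalues)) c)
    (x x' : Fin N → ℝ)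
    (hupd : x' = x + τ • fun i => σ ((-(M.mulVec x + b)) i)) :
    (x' ⬝ᵥ (M.mulVec x' + (2 : ℝ) • b)) - (x ⬝ᵥ (M.mulVec x + (2 : ℝ) • b))
      ≤ c * ((x' - x) ⬝ᵥ (x' - x)) := by
  set d := τ • fun i => σ ((-(M *ᵥ x + b)) i)
  have hsymm : M.IsSymm := (conjTranspose_eq_transpose_of_trivial M).symm.trans hM
  have hquad : d ⬝ᵥ M *ᵥ d ≤ c * (d ⬝ᵥ d) := by
    simpa only [star_trivial, RCLike.re_to_real] using
      hM.re_dotProduct_mulVec_le (fun i => hc.2 (Set.mem_insert_of_mem _ ⟨i, rfl⟩)) d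
  have hdesc : 0 ≤ d ⬝ᵥ -(M *ᵥ x + b) := smul_comp_dotProduct_nonneg hσ hτ.le _
  rw [dotProduct_neg] at hdesc
  rw [hupd, add_sub_cancel_left, hsymm.energy_add_sub]
  linarith
end
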